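/- arXiv:1406.2428 — 5 statements merged into one kernel-verified Lean document; each statement's English description precedes it below -/
import Mathlib

section
/- Let P be a finite set of points in the Euclidean plane ℝ² and let L be a line. Let l be the number of points of P not lying on L. If p ∈ P lies on L, then the number of points of P visible from p (with respect to P) is at most l + 2. -/
/-!
The points of `L` seen from `p` other than `p` lie on the two open rays of `L` issuing from
`p`. Two distinct points of `P` on a common ray are not both visible from `p`, since the nearer
one lies strictly between `p` and the farther one. So at most two visible points lie on `L`,
and every other visible point is one of the `l` points of `P` off `L`.
-/

/-- The Euclidean plane ℝ². -/
abbrev Plane : Type := EuclideanSpace ℝ (Fin 2)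

/-- Two points `p` and `q` are visible to each other with respect to a point set `P`
if they are distinct and no point of `P` lies strictly between them. -/
def Visible (P : Set Plane) (p q : Plane) : Prop :=
  p ≠ q ∧ ∀ r ∈ P, ¬ Sbtw ℝ p r q

/-- A line in the plane: an affine subspace of dimension 1. -/
def IsLine (L : AffineSubspace ℝ Plane) : Prop :=
  Module.finrank ℝ L.direction = 1

open Module

theorem sameRay_or_sameRay_or_sameRay_of_finrank_eq_one {R M : Type*} [Field R] [LinearOrder R]
    [IsStrictOrderedRing R] [AddCommGroup M] [Module R M] (hM : finrank R M = 1) (x y z : M) :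
    SameRay R x y ∨ SameRay R x z ∨ SameRay R y z := by
  obtain ⟨v, -, hv⟩ := finrank_eq_one_iff'.1 hM
  obtain ⟨a, rfl⟩ := hv x
  obtain ⟨b, rfl⟩ := hv y
  obtain ⟨c, rfl⟩ := hv z
  have : 0 ≤ a * b ∨ 0 ≤ a * c ∨ 0 ≤ b * c := by
    by_contra! h
    -- otherwise `(a * b) * (a * c) * (b * c) = (a * b * c) ^ 2` would be negative
    nlinarith [mul_pos_of_neg_of_neg h.1 h.2.1, sq_nonneg (a * b * c)]
  rcases this with h | h | h <;> simp only [sameRay_smul_smul_of_mul_nonneg h, true_or, or_true]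

theorem sbtw_or_sbtw_of_sameRay_vsub_left {R V P : Type*} [Field R] [LinearOrder R]
    [IsStrictOrderedRing R] [AddCommGroup V] [Module R V] [AddTorsor V P] {p a b : P}
    (hpa : a ≠ p) (hpb : b ≠ p) (hab : a ≠ b) (h : SameRay R (a -ᵥ p) (b -ᵥ p)) :
    Sbtw R p a b ∨ Sbtw R p b a :=
  (wbtw_total_of_sameRay_vsub_left h).imp (fun h => ⟨h, hpa, hab⟩) (fun h => ⟨h, hpb, hab.symm⟩)

theorem Visible.eq_of_sameRay {P : Set Plane} {p a b : Plane} (ha : a ∈ P) (hb : b ∈ P)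
    (hpa : Visible P p a) (hpb : Visible P p b) (h : SameRay ℝ (a -ᵥ p) (b -ᵥ p)) : a = b := by
  by_contra hab
  rcases sbtw_or_sbtw_of_sameRay_vsub_left hpa.1.symm hpb.1.symm hab h with h | h
  · exact hpb.2 a ha h
  · exact hpa.2 b hb h

theorem ncard_visible_mem_line_le_two {P : Set Plane} (hP : P.Finite) {L : AffineSubspace ℝ Plane}
    (hL : IsLine L) {p : Plane} (hpL : p ∈ L) :
    {q | q ∈ P ∧ Visible P p q ∧ q ∈ L}.ncard ≤ 2 := by
  by_contra! h
  obtain ⟨a, b, c, ⟨ha, hpa, haL⟩, ⟨hb, hpb, hbL⟩, ⟨hc, hpc, hcL⟩, hab, hac, hbc⟩ :=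
    (Set.two_lt_ncard_iff (hP.subset fun _ hq => hq.1)).1 h
  have dir {q} (hq : q ∈ L) : q -ᵥ p ∈ L.direction := AffineSubspace.vsub_mem_direction hq hpL
  rcases sameRay_or_sameRay_or_sameRay_of_finrank_eq_one hL ⟨_, dir haL⟩ ⟨_, dir hbL⟩
    ⟨_, dir hcL⟩ with h | h | h
  · exact hab (hpa.eq_of_sameRay ha hb hpb (h.map L.direction.subtype))
  · exact hac (hpa.eq_of_sameRay ha hc hpc (h.map L.direction.subtype))
  · exact hbc (hpb.eq_of_sameRay hb hc hpc (h.map L.direction.subtype))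

theorem visible_card_le_of_mem_line_general (P : Set Plane) (hP : P.Finite)
    (L : AffineSubspace ℝ Plane) (hL : IsLine L)
    (l : ℕ) (hl : l = {q : Plane | q ∈ P ∧ q ∉ L}.ncard)
    (p : Plane) (hpL : p ∈ L) :
    {q : Plane | q ∈ P ∧ Visible P p q}.ncard ≤ l + 2 := by
  have hsplit : {q : Plane | q ∈ P ∧ Visible P p q} ⊆
      {q | q ∈ P ∧ q ∉ L} ∪ {q | q ∈ P ∧ Visible P p q ∧ q ∈ L} := by
    rintro q ⟨hq, hpq⟩
    by_cases hqL : q ∈ L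
    exacts [Or.inr ⟨hq, hpq, hqL⟩, Or.inl ⟨hq, hqL⟩]
  calc {q : Plane | q ∈ P ∧ Visible P p q}.ncard
      ≤ ({q | q ∈ P ∧ q ∉ L} ∪ {q | q ∈ P ∧ Visible P p q ∧ q ∈ L}).ncard :=
        Set.ncard_le_ncard hsplit ((hP.subset fun _ hq => hq.1).union (hP.subset fun _ hq => hq.1))
    _ ≤ {q | q ∈ P ∧ q ∉ L}.ncard + {q | q ∈ P ∧ Visible P p q ∧ q ∈ L}.ncard :=
        Set.ncard_union_le _ _
    _ ≤ l + 2 := hl ▸ Nat.add_le_add_left (ncard_visible_mem_line_le_two hP hL hpL) _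

/-- First half of Lemma 2 of the paper: if `p ∈ P` lies on the line `L` and
`l` is the number of points of `P` not on `L`, then `p` sees at most `l + 2`
points of `P`. -/
theorem visible_card_le_of_mem_line (P : Set Plane) (hP : P.Finite)
    (L : AffineSubspace ℝ Plane) (hL : IsLine L)
    (l : ℕ) (hl : l = {q : Plane | q ∈ P ∧ q ∉ L}.ncard)
    (p : Plane) (hp : p ∈ P) (hpL : p ∈ L) :
    {q : Plane | q ∈ P ∧ Visible P p q}.ncard ≤ l + 2 :=
  visible_card_le_of_mem_line_general P hP L hL l hl p hpL
end

section
/- Let P be a finite set of points in the Euclidean plane ℝ² and let L be a line. Let k be the number of points of P lying on L. If p ∈ P does not lie on L, then the number of points of P visible from p (with respect to P) is at least k. -/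
theorem Wbtw.mem_affineSpan_pair_of_ne {k V P : Type*} [Field k] [LinearOrder k]
    [IsStrictOrderedRing k] [AddCommGroup V] [Module k V] [AddTorsor V P] {x y z : P}
    (h : Wbtw k x y z) (hxy : x ≠ y) : z ∈ line[k, x, y] :=
  h.collinear.mem_affineSpan_of_mem_of_ne (by simp) (by simp) (by simp) hxy

theorem eq_of_mem_affineSpan_pair_of_notMem {k V P : Type*} [DivisionRing k] [AddCommGroup V]
    [Module k V] [AddTorsor V P] {L : AffineSubspace k P} {p r q₁ q₂ : P}
    (hpL : p ∉ L) (hq₁L : q₁ ∈ L) (hq₂L : q₂ ∈ L)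
    (hq₁ : q₁ ∈ line[k, p, r]) (hq₂ : q₂ ∈ line[k, p, r]) : q₁ = q₂ := by
  by_contra hne
  have hp : p ∈ line[k, q₁, q₂] :=
    (collinear_insert_insert_of_mem_affineSpan_pair hq₁ hq₂).mem_affineSpan_of_mem_of_ne
      (by simp) (by simp) (by simp) hne
  exact hpL (affineSpan_pair_le_of_mem_of_mem hq₁L hq₂L hp)

theorem exists_visible_wbtw {P : Set Plane} (hP : P.Finite) (p : Plane) {q : Plane}
    (hq : q ∈ P) (hqp : q ≠ p) : ∃ r ∈ P, Visible P p r ∧ Wbtw ℝ p r q := by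
  obtain ⟨r, ⟨hrP, hrq, hrp⟩, hmin⟩ :=
    Set.exists_min_image {r | r ∈ P ∧ Wbtw ℝ p r q ∧ r ≠ p} (dist · p)
      (hP.subset fun _ h => h.1) ⟨q, hq, wbtw_self_right ℝ p q, hqp⟩
  refine ⟨r, hrP, ⟨hrp.symm, fun s hsP hs => ?_⟩, hrq⟩
  have hle : dist r p ≤ dist s p := hmin s ⟨hsP, hrq.trans_left hs.wbtw, hs.ne_left⟩
  have hlt : dist s p < max (dist p p) (dist r p) := hs.dist_lt_max_dist p
  rw [dist_self, max_eq_right dist_nonneg] at hlt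
  exact hle.not_gt hlt

theorem visible_card_ge_of_not_mem_line_general (P : Set Plane) (hP : P.Finite)
    (L : AffineSubspace ℝ Plane)
    (k : ℕ) (hk : k = {q : Plane | q ∈ P ∧ q ∈ L}.ncard)
    (p : Plane) (hpL : p ∉ L) :
    k ≤ {q : Plane | q ∈ P ∧ Visible P p q}.ncard := by
  subst hk
  have hne : ∀ q ∈ L, q ≠ p := fun q hq h => hpL (h ▸ hq)
  choose! f hfP hfvis hfbtw using
    fun q (hqP : q ∈ P) (hqL : q ∈ L) => exists_visible_wbtw hP p hqP (hne q hqL)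
  have hmem : ∀ q ∈ P, q ∈ L → q ∈ line[ℝ, p, f q] := fun q hqP hqL =>
    (hfbtw q hqP hqL).mem_affineSpan_pair_of_ne (hfvis q hqP hqL).1
  refine Set.ncard_le_ncard_of_injOn f (fun q ⟨hqP, hqL⟩ => ⟨hfP q hqP hqL, hfvis q hqP hqL⟩)
    ?_ (hP.subset fun _ h => h.1)
  rintro q₁ ⟨hq₁P, hq₁L⟩ q₂ ⟨hq₂P, hq₂L⟩ hf
  exact eq_of_mem_affineSpan_pair_of_notMem hpL hq₁L hq₂L (hmem q₁ hq₁P hq₁L)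
    (hf ▸ hmem q₂ hq₂P hq₂L)

/-- Second half of Lemma 2 of the paper: if `p ∈ P` does not lie on the line `L` and
`k` is the number of points of `P` on `L`, then `p` sees at least `k` points of `P`. -/
theorem visible_card_ge_of_not_mem_line (P : Set Plane) (hP : P.Finite)
    (L : AffineSubspace ℝ Plane) (hL : IsLine L)
    (k : ℕ) (hk : k = {q : Plane | q ∈ P ∧ q ∈ L}.ncard)
    (p : Plane) (hp : p ∈ P) (hpL : p ∉ L) :
    k ≤ {q : Plane | q ∈ P ∧ Visible P p q}.ncard :=
  visible_card_ge_of_not_mem_line_general P hP L k hk p hpL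
end

section
/- Let P and P' be finite sets of points in the Euclidean plane ℝ² and let f : P → P' be a visibility isomorphism. Let L be a line, let k be the number of points of P on L and l the number of points of P not on L. If k ≥ (l + 3)², then the image set f(P ∩ L) is collinear, i.e., all images of the points of P lying on L lie on a common line in the plane. -/
/-- A visibility isomorphism between two point sets: a bijection of `P` onto `P'`
preserving the visibility relation in both directions. -/
def VisIso (P P' : Set Plane) (f : Plane → Plane) : Prop :=
  Set.BijOn f P P' ∧
    ∀ p ∈ P, ∀ q ∈ P, p ≠ q → (Visible P p q ↔ Visible P' (f p) (f q))

/-!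
A point `p` of `P` on `L` sees at most two points of `L` (the points of `L` seen from `p` lie on
opposite sides of `p`), so it sees at most `l + 2` points of `P`, and visibility isomorphisms
preserve these numbers. In `P'`, pick `a` among the `k` images: every other image lies on a line
through `a` and one of the at most `l + 2` points visible from `a`, so by pigeonhole one such line
carries more than `l + 2` images. An image off that line would see those images along pairwise
distinct lines, hence would see more than `l + 2` points.
-/

theorem AffineSubspace.collinear_coe_iff {k V P : Type*} [DivisionRing k] [AddCommGroup V]
    [Module k V] [AddTorsor V P] (s : AffineSubspace k P) :
    Collinear k (s : Set P) ↔ Module.rank k s.direction ≤ 1 := by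
  rw [Collinear, s.direction_eq_vectorSpan]

theorem collinear_of_subset_affineSpan_pair {k V P : Type*} [DivisionRing k] [AddCommGroup V]
    [Module k V] [AddTorsor V P] {s : Set P} {a b : P} (h : s ⊆ line[k, a, b]) :
    Collinear k s :=
  ((AffineSubspace.collinear_coe_iff _).2 <| by
    rw [direction_affineSpan]; exact collinear_pair k a b).subset h

def visibleFrom (P : Set Plane) (p : Plane) : Set Plane :=
  {q ∈ P | Visible P p q}

theorem Visible.eq_of_wbtw {P : Set Plane} {p x y : Plane} (hy : Visible P p y) (hx : x ∈ P)
    (hxp : x ≠ p) (h : Wbtw ℝ p x y) : x = y := by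
  by_contra hxy
  exact hy.2 x hx ⟨h, hxp, hxy⟩

theorem sbtw_of_mem_visibleFrom {P : Set Plane} {p x y : Plane} (hx : x ∈ visibleFrom P p)
    (hy : y ∈ visibleFrom P p) (hxy : x ≠ y) (hcol : Collinear ℝ ({x, p, y} : Set Plane)) :
    Sbtw ℝ x p y := by
  rcases hcol.wbtw_or_wbtw_or_wbtw with h | h | h
  · exact ⟨h, hx.2.1, hy.2.1⟩
  · exact absurd (hx.2.eq_of_wbtw hy.1 hy.2.1.symm h) hxy.symm
  · exact absurd (hy.2.eq_of_wbtw hx.1 hx.2.1.symm (wbtw_comm.1 h)) hxy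

theorem ncard_visibleFrom_inter_le_two {P s : Set Plane} {p : Plane} (hs : Collinear ℝ s)
    (hp : p ∈ s) : (visibleFrom P p ∩ s).ncard ≤ 2 := by
  rcases (visibleFrom P p ∩ s).infinite_or_finite with hinf | hfin
  · simp [hinf.ncard]
  by_contra! h
  obtain ⟨a, ha, b, hb, c, hc, hab, hac, hbc⟩ := (Set.two_lt_ncard hfin).1 h
  -- `p` lies strictly between any two of the points, so whichever of them is the middle one
  -- hides the third from `p`.
  have no_middle : ∀ u ∈ visibleFrom P p ∩ s, ∀ v ∈ visibleFrom P p ∩ s,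
      ∀ w ∈ visibleFrom P p ∩ s, u ≠ v → v ≠ w → ¬ Wbtw ℝ u v w := by
    intro u hu v hv w hw huv hvw h
    have hupv : Sbtw ℝ u p v := sbtw_of_mem_visibleFrom hu.1 hv.1 huv
      (hs.subset (by simp [Set.insert_subset_iff, hu.2, hv.2, hp]))
    exact hvw (hw.1.2.eq_of_wbtw hv.1.1 hv.1.2.1.symm (h.trans_left_right hupv.wbtw))
  rcases (hs.subset (s₁ := {a, b, c})
    (by simp [Set.insert_subset_iff, ha.2, hb.2, hc.2])).wbtw_or_wbtw_or_wbtw with h | h | h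
  · exact no_middle a ha b hb c hc hab hbc h
  · exact no_middle b hb c hc a ha hbc hac.symm h
  · exact no_middle c hc a ha b hb hac.symm hab h

theorem ncard_visibleFrom_le_of_collinear {P s : Set Plane} {p : Plane} (hP : P.Finite)
    (hs : Collinear ℝ s) (hp : p ∈ s) : (visibleFrom P p).ncard ≤ (P \ s).ncard + 2 := by
  have hsub : visibleFrom P p ⊆ (P \ s) ∪ (visibleFrom P p ∩ s) := fun q hq => by
    by_cases hqs : q ∈ s
    · exact Or.inr ⟨hq, hqs⟩
    · exact Or.inl ⟨hq.1, hqs⟩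
  calc (visibleFrom P p).ncard ≤ ((P \ s) ∪ (visibleFrom P p ∩ s)).ncard :=
        Set.ncard_le_ncard hsub (hP.sdiff.union (hP.subset fun q hq => hq.1.1))
    _ ≤ (P \ s).ncard + (visibleFrom P p ∩ s).ncard := Set.ncard_union_le _ _
    _ ≤ (P \ s).ncard + 2 := by grw [ncard_visibleFrom_inter_le_two hs hp]

-- The nearest point of `P` on the segment from `p` to `q` is visible from `p`.
theorem exists_mem_visibleFrom_mem_line {P : Set Plane} {p q : Plane} (hP : P.Finite)
    (hq : q ∈ P) (hpq : p ≠ q) : ∃ r ∈ visibleFrom P p, q ∈ line[ℝ, p, r] := by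
  obtain ⟨r, ⟨hrP, hr, hrp⟩, hmin⟩ :=
    Set.exists_min_image {r ∈ P | Wbtw ℝ p r q ∧ r ≠ p} (dist p) (hP.subset (Set.sep_subset _ _))
      ⟨q, hq, wbtw_self_right ℝ p q, hpq.symm⟩
  refine ⟨r, ⟨hrP, hrp.symm, fun s hs hsb => ?_⟩,
    hr.collinear.mem_affineSpan_of_mem_of_ne (by simp) (by simp) (by simp) hrp.symm⟩
  have hle := hmin s ⟨hs, hr.trans_left hsb.wbtw, hsb.ne_left⟩
  have hlt := hsb.dist_lt_max_dist p
  rw [dist_self, max_eq_right dist_nonneg, dist_comm s, dist_comm r] at hlt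
  linarith

-- Points of `P ∩ s` seen from `y` along the same line through `y` would put `y` on `s`.
theorem ncard_inter_le_ncard_visibleFrom {P : Set Plane} {y : Plane} (hP : P.Finite)
    {s : AffineSubspace ℝ Plane} (hy : y ∉ s) :
    (P ∩ s).ncard ≤ (visibleFrom P y).ncard := by
  choose! r hr using fun x (hx : x ∈ P ∩ s) =>
    exists_mem_visibleFrom_mem_line hP hx.1 (fun h : y = x => hy (h ▸ hx.2))
  refine Set.ncard_le_ncard_of_injOn r (fun x hx => (hr x hx).1) (fun x hx x' hx' hrx => ?_)
    (hP.subset fun q hq => hq.1)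
  by_contra hxx'
  have hcol : Collinear ℝ ({x, x', y, r x'} : Set Plane) :=
    collinear_insert_insert_of_mem_affineSpan_pair (hrx ▸ (hr x hx).2) (hr x' hx').2
  have hyxx' : y ∈ line[ℝ, x, x'] :=
    hcol.mem_affineSpan_of_mem_of_ne (by simp) (by simp) (by simp) hxx'
  exact hy (affineSpan_pair_le_of_mem_of_mem hx.2 hx'.2 hyxx')

theorem exists_lt_ncard_inter_line {P Q : Set Plane} {a : Plane} {n : ℕ} (hP : P.Finite)
    (hQP : Q ⊆ P) (h : (visibleFrom P a).ncard * n < (Q \ {a}).ncard) :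
    ∃ r, n < (Q ∩ line[ℝ, a, r]).ncard := by
  choose! r hr using fun x (hx : x ∈ Q \ {a}) =>
    exists_mem_visibleFrom_mem_line hP (hQP hx.1) (Ne.symm hx.2)
  have hVfin : (visibleFrom P a).Finite := hP.subset fun q hq => hq.1
  have hQfin : (Q \ {a}).Finite := (hP.subset hQP).sdiff
  rw [Set.ncard_eq_toFinset_card _ hVfin, Set.ncard_eq_toFinset_card _ hQfin] at h
  obtain ⟨r₀, -, hr₀⟩ := Finset.exists_lt_card_fiber_of_mul_lt_card_of_maps_to
    (f := r) (fun x hx => by simpa using (hr x (by simpa using hx)).1) h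
  refine ⟨r₀, hr₀.trans_le ?_⟩
  rw [← Set.ncard_coe_finset]
  refine Set.ncard_le_ncard (fun x hx => ?_) ((hP.subset hQP).inter_of_left _)
  simp only [Finset.coe_filter, Set.Finite.mem_toFinset, Set.mem_ofPred_eq] at hx
  exact ⟨hx.1.1, hx.2 ▸ (hr x hx.1).2⟩

theorem collinear_of_ncard_visibleFrom_le {P Q : Set Plane} {d : ℕ} (hP : P.Finite)
    (hQP : Q ⊆ P) (hdeg : ∀ q ∈ Q, (visibleFrom P q).ncard ≤ d)
    (hcard : d * d + 1 < Q.ncard) : Collinear ℝ Q := by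
  obtain ⟨a, ha⟩ : Q.Nonempty := Set.nonempty_of_ncard_ne_zero (by omega)
  have hQa : d * d < (Q \ {a}).ncard := by
    rw [Set.ncard_sdiff_singleton_of_mem ha]; omega
  obtain ⟨r, hr⟩ := exists_lt_ncard_inter_line (n := d) hP hQP
    ((Nat.mul_le_mul_right d (hdeg a ha)).trans_lt hQa)
  refine collinear_of_subset_affineSpan_pair (a := a) (b := r) fun y hy => ?_
  by_contra hyr
  have := (Set.ncard_le_ncard (Set.inter_subset_inter_left _ hQP) (hP.inter_of_left _)).trans
    ((ncard_inter_le_ncard_visibleFrom hP hyr).trans (hdeg y hy))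
  omega

theorem VisIso.image_visibleFrom {P P' : Set Plane} {f : Plane → Plane} (hf : VisIso P P' f)
    {p : Plane} (hp : p ∈ P) : f '' visibleFrom P p = visibleFrom P' (f p) := by
  ext q'
  constructor
  · rintro ⟨q, hq, rfl⟩
    exact ⟨hf.1.mapsTo hq.1, (hf.2 p hp q hq.1 hq.2.1).1 hq.2⟩
  · rintro ⟨hq'P', hvis⟩
    obtain ⟨q, hq, rfl⟩ := hf.1.surjOn hq'P'
    have hpq : p ≠ q := fun h => hvis.1 (h ▸ rfl)
    exact ⟨q, ⟨hq, (hf.2 p hp q hq hpq).2 hvis⟩, rfl⟩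

theorem VisIso.ncard_visibleFrom {P P' : Set Plane} {f : Plane → Plane} (hf : VisIso P P' f)
    {p : Plane} (hp : p ∈ P) : (visibleFrom P' (f p)).ncard = (visibleFrom P p).ncard := by
  rw [← hf.image_visibleFrom hp, Set.InjOn.ncard_image (hf.1.injOn.mono fun q hq => hq.1)]

theorem image_of_heavy_line_collinear_general (P P' : Set Plane)
    (hP : P.Finite)
    (f : Plane → Plane) (hf : VisIso P P' f)
    (L : AffineSubspace ℝ Plane) (hL : IsLine L)
    (k l : ℕ)
    (hk : k = (P ∩ (L : Set Plane)).ncard)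
    (hl : l = (P \ (L : Set Plane)).ncard)
    (hkl : (l + 3) ^ 2 ≤ k) :
    Collinear ℝ (f '' (P ∩ (L : Set Plane))) := by
  have hP' : P'.Finite := hf.1.image_eq ▸ hP.image f
  have hLcol : Collinear ℝ (L : Set Plane) :=
    L.collinear_coe_iff.2 (Module.rank_eq_one_iff_finrank_eq_one.2 hL).le
  refine collinear_of_ncard_visibleFrom_le (d := l + 2) hP'
    ((hf.1.mapsTo.mono_left Set.inter_subset_left).image_subset) ?_ ?_
  · rintro _ ⟨p, hp, rfl⟩
    rw [hf.ncard_visibleFrom hp.1, hl]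
    exact ncard_visibleFrom_le_of_collinear hP hLcol hp.2
  · rw [(hf.1.injOn.mono Set.inter_subset_left).ncard_image, ← hk]
    nlinarith

/-- Part of Lemma 3 of the paper: if a line `L` contains `k` points of `P` and `l`
points of `P` lie off `L`, with `k ≥ (l + 3)²`, then the images under a visibility
isomorphism of the points of `P` on `L` are collinear. -/
theorem image_of_heavy_line_collinear (P P' : Set Plane)
    (hP : P.Finite) (hP' : P'.Finite)
    (f : Plane → Plane) (hf : VisIso P P' f)
    (L : AffineSubspace ℝ Plane) (hL : IsLine L)
    (k l : ℕ)
    (hk : k = (P ∩ (L : Set Plane)).ncard)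
    (hl : l = (P \ (L : Set Plane)).ncard)
    (hkl : (l + 3) ^ 2 ≤ k) :
    Collinear ℝ (f '' (P ∩ (L : Set Plane))) :=
  image_of_heavy_line_collinear_general P P' hP f hf L hL k l hk hl hkl
end

section
/- Let P and P' be finite sets of points in the Euclidean plane ℝ² and let f : P → P' be a visibility isomorphism. Let L be a line, let k be the number of points of P on L and l the number of points of P not on L, and suppose k ≥ (l + 3)². Then f preserves the order of the points of P along L: for all points a, b, c ∈ P ∩ L, if b lies strictly between a and c, then f(b) lies strictly between f(a) and f(c). -/
open Set Function

theorem sbtw_iff_mem_uIoo {R : Type*} [Field R] [LinearOrder R] [IsStrictOrderedRing R]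
    {x y z : R} : Sbtw R x y z ↔ y ∈ uIoo x z := by
  wlog h : x ≤ z generalizing x z
  · rw [sbtw_comm, uIoo_comm]
    exact this (le_of_not_ge h)
  rw [uIoo_of_le h, Sbtw, wbtw_iff_of_le h]
  constructor
  · rintro ⟨⟨h₁, h₂⟩, hyx, hyz⟩
    exact ⟨lt_of_le_of_ne h₁ (Ne.symm hyx), lt_of_le_of_ne h₂ hyz⟩
  · rintro ⟨h₁, h₂⟩
    exact ⟨⟨h₁.le, h₂.le⟩, h₁.ne', h₂.ne⟩

theorem Collinear.exists_injOn_sbtw_iff {V P : Type*} [AddCommGroup V] [Module ℝ V]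
    [AddTorsor V P] {s : Set P} (h : Collinear ℝ s) :
    ∃ t : P → ℝ, InjOn t s ∧
      ∀ x ∈ s, ∀ y ∈ s, ∀ z ∈ s, (Sbtw ℝ x y z ↔ t y ∈ uIoo (t x) (t z)) := by
  obtain ⟨p₀, v, hv⟩ := (collinear_iff_exists_forall_eq_smul_vadd s).1 h
  rcases eq_or_ne v 0 with rfl | hv0
  · have hs : ∀ x ∈ s, x = p₀ := fun x hx => by simpa using hv x hx
    refine ⟨fun _ => 0, fun x hx y hy _ => (hs x hx).trans (hs y hy).symm,
      fun x hx y hy z _ => ?_⟩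
    simp [hs x hx, hs y hy, Sbtw]
  · set φ : ℝ →ᵃ[ℝ] P := AffineMap.lineMap p₀ (v +ᵥ p₀)
    have hφ : Injective φ := AffineMap.lineMap_injective ℝ fun h =>
      hv0 (by simpa using congrArg (· -ᵥ p₀) h.symm)
    have hφinv : ∀ x ∈ s, φ (invFun φ x) = x := fun x hx => invFun_eq <| by
      obtain ⟨r, rfl⟩ := hv x hx
      exact ⟨r, by simp [φ, AffineMap.lineMap_apply]⟩
    refine ⟨invFun φ, fun x hx y hy hxy => by rw [← hφinv x hx, ← hφinv y hy, hxy],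
      fun x hx y hy z hz => ?_⟩
    rw [← sbtw_iff_mem_uIoo, ← hφ.sbtw_map_iff, hφinv x hx, hφinv y hy, hφinv z hz]

theorem mem_uIoo_of_notMem_uIoo {α : Type*} [LinearOrder α] {x y z : α} (hxy : x ≠ y)
    (hyz : y ≠ z) (hxz : x ≠ z) (hz : z ∉ uIoo x y) (hx : x ∉ uIoo y z) : y ∈ uIoo x z := by
  simp only [uIoo_eq_union, mem_union, mem_Ioo] at *
  grind

theorem Fin.strictMono_or_strictAnti_of_notMem_uIoo {α : Type*} [LinearOrder α] {n : ℕ}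
    {s : Fin (n + 1) → α} (hs : Injective s)
    (hadj : ∀ (i : Fin n) m, s m ∉ uIoo (s i.castSucc) (s i.succ)) :
    StrictMono s ∨ StrictAnti s := by
  cases n with
  | zero => exact Or.inl fun i j hij => by omega
  | succ n =>
  have hstep : ∀ i : Fin n, s i.castSucc.castSucc < s i.castSucc.succ ↔
      s i.succ.castSucc < s i.succ.succ := by
    intro i
    have hyz := hadj i.succ i.castSucc.castSucc
    rw [← Fin.succ_castSucc] at hyz ⊢
    have hmid := mem_uIoo_of_notMem_uIoo (hs.ne (by simp [Fin.ext_iff]))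
      (hs.ne (by simp [Fin.ext_iff])) (hs.ne (by simp [Fin.ext_iff]; omega))
      (hadj i.castSucc i.succ.succ) hyz
    simp only [uIoo_eq_union, mem_union, mem_Ioo] at hmid
    grind
  have hsame : ∀ i : Fin (n + 1), s i.castSucc < s i.succ ↔ s (castSucc 0) < s (succ 0) := by
    intro i
    induction i using Fin.induction with
    | zero => rfl
    | succ i ih => exact (hstep i).symm.trans ih
  by_cases h0 : s (castSucc 0) < s (succ 0)
  · exact Or.inl (Fin.strictMono_iff_lt_succ.2 fun i => (hsame i).2 h0)
  · refine Or.inr (Fin.strictAnti_iff_succ_lt.2 fun i => ?_)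
    exact lt_of_le_of_ne (not_lt.1 (mt (hsame i).1 h0))
      (hs.ne (Fin.castSucc_lt_succ (i := i)).ne).symm

theorem Set.Finite.exists_fin_strictMono_comp {X α : Type*} [LinearOrder α] {A : Set X}
    (hA : A.Finite) {u : X → α} (hu : InjOn u A) {n : ℕ} (hn : A.ncard = n) :
    ∃ e : Fin n → X, StrictMono (u ∘ e) ∧ range e = A := by
  classical
  have hT : (hA.toFinset.image u).card = n := by
    rw [Finset.card_image_of_injOn (by simpa using hu), ← hn, ncard_eq_toFinset_card A hA]
  set ε := (hA.toFinset.image u).orderEmbOfFin hT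
  have hε : ∀ i, ∃ a ∈ A, u a = ε i := fun i => by
    simpa using Finset.mem_image.1 ((hA.toFinset.image u).orderEmbOfFin_mem hT i)
  choose e heA hue using hε
  refine ⟨e, fun i j hij => ?_, subset_antisymm (range_subset_iff.2 heA) fun a ha => ?_⟩
  · simpa [hue] using ε.strictMono hij
  · have : u a ∈ range ε := by simpa [ε, Finset.range_orderEmbOfFin] using ⟨a, ha, rfl⟩
    obtain ⟨i, hi⟩ := this
    exact ⟨i, hu (heA i) ha ((hue i).trans hi)⟩

theorem mem_uIoo_of_forall_notMem_uIoo {X α β : Type*} [LinearOrder α] [LinearOrder β]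
    {A : Set X} (hA : A.Finite) {u : X → α} {w : X → β} (hu : InjOn u A) (hw : InjOn w A)
    (hadj : ∀ a ∈ A, ∀ b ∈ A, (∀ c ∈ A, u c ∉ uIoo (u a) (u b)) →
      ∀ c ∈ A, w c ∉ uIoo (w a) (w b))
    {a b c : X} (ha : a ∈ A) (hb : b ∈ A) (hc : c ∈ A) (hbac : u b ∈ uIoo (u a) (u c)) :
    w b ∈ uIoo (w a) (w c) := by
  obtain ⟨n, hn⟩ : ∃ n, A.ncard = n + 1 :=
    ⟨A.ncard - 1, by have := (ncard_pos hA).2 ⟨a, ha⟩; omega⟩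
  obtain ⟨e, he, rfl⟩ := hA.exists_fin_strictMono_comp hu hn
  have hwe : Injective (w ∘ e) := fun i j h =>
    he.injective (congrArg u (hw (mem_range_self i) (mem_range_self j) h))
  have hu_lt : ∀ i j, u (e i) < u (e j) ↔ i < j := fun _ _ => he.lt_iff_lt
  have hwe_adj : ∀ (i : Fin n) m, (w ∘ e) m ∉ uIoo ((w ∘ e) i.castSucc) ((w ∘ e) i.succ) := by
    refine fun i m => hadj _ (mem_range_self _) _ (mem_range_self _) ?_ _ (mem_range_self m)
    rintro _ ⟨j, rfl⟩
    rw [uIoo_of_lt ((hu_lt _ _).2 (Fin.castSucc_lt_succ (i := i))), mem_Ioo, hu_lt, hu_lt]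
    rintro ⟨h₁, h₂⟩
    simp only [Fin.lt_def, Fin.val_castSucc, Fin.val_succ] at h₁ h₂
    omega
  obtain ⟨i, rfl⟩ := ha
  obtain ⟨j, rfl⟩ := hb
  obtain ⟨k, rfl⟩ := hc
  have hjik : j ∈ uIoo i k := by
    simpa only [uIoo_eq_union, mem_union, mem_Ioo, hu_lt] using hbac
  rcases Fin.strictMono_or_strictAnti_of_notMem_uIoo hwe hwe_adj with hmono | hanti
  · have hw_lt : ∀ i j, w (e i) < w (e j) ↔ i < j := fun _ _ => hmono.lt_iff_lt
    simpa only [uIoo_eq_union, mem_union, mem_Ioo, hw_lt] using hjik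
  · have hw_lt : ∀ i j, w (e i) < w (e j) ↔ j < i := fun _ _ => hanti.lt_iff_gt
    simp only [uIoo_eq_union, mem_union, mem_Ioo, hw_lt] at hjik ⊢
    tauto

def visibleSet (P : Set Plane) (x : Plane) : Set Plane := {y ∈ P | Visible P x y}

theorem visibleSet_subset (P : Set Plane) (x : Plane) : visibleSet P x ⊆ P := sep_subset _ _

theorem Visible.mono {P Q : Set Plane} {p q : Plane} (h : Visible P p q) (hQP : Q ⊆ P) :
    Visible Q p q :=
  ⟨h.1, fun r hr => h.2 r (hQP hr)⟩

theorem Visible.of_inter {P : Set Plane} {L : AffineSubspace ℝ Plane} {p q : Plane}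
    (h : Visible (P ∩ L) p q) (hp : p ∈ L) (hq : q ∈ L) : Visible P p q :=
  ⟨h.1, fun r hr hs =>
    h.2 r ⟨hr, affineSpan_pair_le_of_mem_of_mem hp hq hs.wbtw.mem_affineSpan⟩ hs⟩

theorem VisIso.image_visibleSet {P P' : Set Plane} {f : Plane → Plane} (hf : VisIso P P' f)
    {p : Plane} (hp : p ∈ P) : f '' visibleSet P p = visibleSet P' (f p) := by
  ext y
  constructor
  · rintro ⟨x, ⟨hx, hvis⟩, rfl⟩
    exact ⟨hf.1.mapsTo hx, (hf.2 p hp x hx hvis.1).1 hvis⟩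
  · rintro ⟨hy, hvis⟩
    obtain ⟨x, hx, rfl⟩ := hf.1.surjOn hy
    exact ⟨x, ⟨hx, (hf.2 p hp x hx (fun h => hvis.1 (h ▸ rfl))).2 hvis⟩, rfl⟩

theorem exists_mem_visibleSet_wbtw {P : Set Plane} (hP : P.Finite) {x y : Plane}
    (hy : y ∈ P) (hyx : y ≠ x) : ∃ d ∈ visibleSet P x, Wbtw ℝ x d y := by
  set S : Set Plane := {z ∈ P | z ≠ x ∧ Wbtw ℝ x z y}
  obtain ⟨d, hdS, hdmin⟩ := S.exists_min_image (dist x) (hP.subset fun z hz => hz.1)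
    ⟨y, hy, hyx, wbtw_self_right ℝ x y⟩
  refine ⟨d, ⟨hdS.1, Ne.symm hdS.2.1, fun r hr hsb => ?_⟩, hdS.2.2⟩
  have hrS : r ∈ S := ⟨hr, hsb.ne_left, hdS.2.2.trans_left hsb.wbtw⟩
  have := hdmin r hrS
  have := hsb.wbtw.dist_add_dist
  have := dist_pos.2 hsb.ne_right
  linarith

theorem mem_of_wbtw_of_wbtw {V P : Type*} [AddCommGroup V] [Module ℝ V] [AddTorsor V P]
    {M : AffineSubspace ℝ P} {x d y y' : P} (h : Wbtw ℝ x d y) (h' : Wbtw ℝ x d y')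
    (hxd : x ≠ d) (hyy' : y ≠ y') (hy : y ∈ M) (hy' : y' ∈ M) : x ∈ M := by
  have hcol := collinear_insert_insert_of_mem_affineSpan_pair
    (h.right_mem_affineSpan_of_left_ne hxd) (h'.right_mem_affineSpan_of_left_ne hxd)
  exact affineSpan_pair_le_of_mem_of_mem hy hy'
    (hcol.mem_affineSpan_of_mem_of_ne (by simp) (by simp) (by simp) hyy')

theorem ncard_inter_le_ncard_visibleSet {P : Set Plane} (hP : P.Finite)
    {M : AffineSubspace ℝ Plane} {x : Plane} (hx : x ∉ M) :
    (P ∩ M).ncard ≤ (visibleSet P x).ncard := by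
  choose! g hgvis hgw using fun y (hy : y ∈ P ∩ M) =>
    exists_mem_visibleSet_wbtw (x := x) hP hy.1 (by rintro rfl; exact hx hy.2)
  refine ncard_le_ncard_of_injOn g hgvis (fun y hy y' hy' hgy => ?_) (hP.subset fun _ h => h.1)
  by_contra hne
  exact hx (mem_of_wbtw_of_wbtw (hgw y hy) (hgy ▸ hgw y' hy') (hgvis y hy).2.1 hne hy.2 hy'.2)

theorem exists_lt_ncard_inter_affineSpan_pair {P S : Set Plane} (hP : P.Finite) (hSP : S ⊆ P)
    {x : Plane} (hx : x ∈ S) {D : ℕ} (hdeg : (visibleSet P x).ncard ≤ D)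
    (hS : D * D + 1 < S.ncard) : ∃ d, D < (S ∩ line[ℝ, x, d]).ncard := by
  classical
  have hSfin : S.Finite := hP.subset hSP
  have hVfin : (visibleSet P x).Finite := hP.subset (visibleSet_subset P x)
  choose! g hgvis hgw using fun y (hy : y ∈ S \ {x}) =>
    exists_mem_visibleSet_wbtw hP (hSP hy.1) hy.2
  have hcard : hVfin.toFinset.card * D < (hSfin.sdiff (t := {x})).toFinset.card := by
    rw [← ncard_eq_toFinset_card _ hVfin, ← ncard_eq_toFinset_card _ (hSfin.sdiff),
      ncard_sdiff_singleton_of_mem hx]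
    have := Nat.mul_le_mul_right D hdeg
    omega
  obtain ⟨d, hd, hfiber⟩ :=
    Finset.exists_lt_card_fiber_of_mul_lt_card_of_maps_to (by simpa using hgvis) hcard
  refine ⟨d, hfiber.trans_le ?_⟩
  rw [← ncard_coe_finset]
  refine ncard_le_ncard (fun y hy => ?_) (hSfin.inter_of_left _)
  simp only [Finset.coe_filter, Finite.mem_toFinset] at hy
  obtain ⟨hy, rfl⟩ := hy
  exact ⟨hy.1, (hgw y hy).right_mem_affineSpan_of_left_ne (hgvis y hy).2.1⟩

theorem collinear_affineSpan_pair {V P : Type*} [AddCommGroup V] [Module ℝ V] [AddTorsor V P]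
    (x y : P) : Collinear ℝ (line[ℝ, x, y] : Set P) := by
  rw [Collinear, ← AffineSubspace.direction, direction_affineSpan]
  exact collinear_pair ℝ x y

theorem collinear_of_ncard_visibleSet_le {P S : Set Plane} (hP : P.Finite) (hSP : S ⊆ P)
    {D : ℕ} (hdeg : ∀ x ∈ S, (visibleSet P x).ncard ≤ D) (hS : D * D + 1 < S.ncard) :
    Collinear ℝ S := by
  obtain ⟨x, hx⟩ : S.Nonempty := nonempty_of_ncard_ne_zero (by omega)
  obtain ⟨d, hd⟩ := exists_lt_ncard_inter_affineSpan_pair hP hSP hx (hdeg x hx) hS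
  have hSM : S ⊆ line[ℝ, x, d] := fun y hy => by
    by_contra hyM
    have h₁ := ncard_le_ncard (inter_subset_inter_left (line[ℝ, x, d] : Set Plane) hSP)
      (hP.inter_of_left _)
    have h₂ := ncard_inter_le_ncard_visibleSet hP hyM
    have h₃ := hdeg y hy
    omega
  exact (collinear_affineSpan_pair x d).subset hSM

theorem ncard_visibleSet_inter_le_two (P : Set Plane) {s : Set Plane} (hs : Collinear ℝ s)
    {p : Plane} (hp : p ∈ s) : (visibleSet P p ∩ s).ncard ≤ 2 := by
  obtain ⟨t, ht, hsbtw⟩ := hs.exists_injOn_sbtw_iff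
  -- a point of `s` visible from `p` is determined by the side of `p` on which it lies
  have hside : InjOn (fun x => decide (t x < t p)) (visibleSet P p ∩ s) := by
    rintro x ⟨⟨hxP, hvx⟩, hxs⟩ y ⟨⟨hyP, hvy⟩, hys⟩ hxy
    by_contra hne
    have : Sbtw ℝ p x y ∨ Sbtw ℝ p y x := by
      rw [hsbtw p hp x hxs y hys, hsbtw p hp y hys x hxs]
      have := ht.ne hxs hys hne
      have := ht.ne hp hxs hvx.1
      have := ht.ne hp hys hvy.1
      simp only [decide_eq_decide] at hxy
      simp only [uIoo_eq_union, mem_union, mem_Ioo]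
      grind
    rcases this with h | h
    · exact hvy.2 x hxP h
    · exact hvx.2 y hyP h
  calc (visibleSet P p ∩ s).ncard ≤ (univ : Set Bool).ncard :=
        ncard_le_ncard_of_injOn _ (fun _ _ => mem_univ _) hside
    _ = 2 := by simp

theorem ncard_visibleSet_le {P s : Set Plane} (hP : P.Finite) (hs : Collinear ℝ s) {p : Plane}
    (hp : p ∈ s) : (visibleSet P p).ncard ≤ (P \ s).ncard + 2 := by
  have hsub : visibleSet P p ⊆ (P \ s) ∪ (visibleSet P p ∩ s) := fun y hy => by
    by_cases hys : y ∈ s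
    · exact Or.inr ⟨hy, hys⟩
    · exact Or.inl ⟨hy.1, hys⟩
  calc (visibleSet P p).ncard ≤ ((P \ s) ∪ (visibleSet P p ∩ s)).ncard :=
        ncard_le_ncard hsub (hP.sdiff.union (hP.subset fun _ h => h.1.1))
    _ ≤ (P \ s).ncard + (visibleSet P p ∩ s).ncard := ncard_union_le _ _
    _ ≤ (P \ s).ncard + 2 := by have := ncard_visibleSet_inter_le_two P hs hp; omega

theorem sbtw_image_of_visible_image {A : Set Plane} (hA : A.Finite) (hAc : Collinear ℝ A)
    {f : Plane → Plane} (hf : InjOn f A) (hfA : Collinear ℝ (f '' A))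
    (hvis : ∀ a ∈ A, ∀ b ∈ A, Visible A a b → Visible (f '' A) (f a) (f b))
    {a b c : Plane} (ha : a ∈ A) (hb : b ∈ A) (hc : c ∈ A) (h : Sbtw ℝ a b c) :
    Sbtw ℝ (f a) (f b) (f c) := by
  obtain ⟨t, ht, htA⟩ := hAc.exists_injOn_sbtw_iff
  obtain ⟨t', ht', ht'A⟩ := hfA.exists_injOn_sbtw_iff
  have hmem : ∀ {x}, x ∈ A → f x ∈ f '' A := mem_image_of_mem f
  rw [ht'A _ (hmem ha) _ (hmem hb) _ (hmem hc)]
  refine mem_uIoo_of_forall_notMem_uIoo (w := t' ∘ f) hA ht (ht'.comp hf (mapsTo_image f A))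
    (fun x hx y hy hxy z hz hz' => ?_) ha hb hc ((htA a ha b hb c hc).1 h)
  have hne : x ≠ y := by rintro rfl; simp at hz'
  refine (hvis x hx y hy ⟨hne, fun r hr hs => hxy r hr ((htA x hx r hr y hy).1 hs)⟩).2 (f z)
    (hmem hz) ((ht'A _ (hmem hx) _ (hmem hz) _ (hmem hy)).2 hz')

/-- Part of Lemma 3 of the paper: if a line `L` contains `k` points of `P` and `l`
points of `P` lie off `L`, with `k ≥ (l + 3)²`, then a visibility isomorphism
preserves the order of the points of `P` along `L`: strict betweenness of triples
of points of `P ∩ L` is preserved. -/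
theorem image_line_order_preserved (P P' : Set Plane)
    (hP : P.Finite) (hP' : P'.Finite)
    (f : Plane → Plane) (hf : VisIso P P' f)
    (L : AffineSubspace ℝ Plane) (hL : IsLine L)
    (k l : ℕ)
    (hk : k = (P ∩ (L : Set Plane)).ncard)
    (hl : l = (P \ (L : Set Plane)).ncard)
    (hkl : (l + 3) ^ 2 ≤ k) :
    ∀ a ∈ P ∩ (L : Set Plane), ∀ b ∈ P ∩ (L : Set Plane), ∀ c ∈ P ∩ (L : Set Plane),
      Sbtw ℝ a b c → Sbtw ℝ (f a) (f b) (f c) := by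
  intro a ha b hb c hc hbtw
  set A := P ∩ (L : Set Plane)
  have hLc : Collinear ℝ (L : Set Plane) := collinear_iff_finrank_le_one.2 hL.le
  have hfA : InjOn f A := hf.1.injOn.mono inter_subset_left
  have hfAP' : f '' A ⊆ P' := (image_mono inter_subset_left).trans hf.1.mapsTo.image_subset
  have hdeg : ∀ y ∈ f '' A, (visibleSet P' y).ncard ≤ l + 2 := by
    rintro _ ⟨x, hx, rfl⟩
    rw [← hf.image_visibleSet hx.1, (hf.1.injOn.mono (visibleSet_subset P x)).ncard_image, hl]
    exact ncard_visibleSet_le hP hLc hx.2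
  have hcol : Collinear ℝ (f '' A) :=
    collinear_of_ncard_visibleSet_le hP' hfAP' hdeg (by rw [hfA.ncard_image, ← hk]; nlinarith)
  refine sbtw_image_of_visible_image (hP.subset inter_subset_left) (hLc.subset inter_subset_right)
    hfA hcol (fun x hx y hy hxy => ?_) ha hb hc hbtw
  exact ((hf.2 x hx.1 y hy.1 hxy.1).1 (hxy.of_inter hx.2 hy.2)).mono hfAP'
end

section
/- Let L be a line in ℝ², let p₁, …, p_q be distinct points on L, and for each i let l_i be a line with p_i ∈ l_i and l_i ≠ L. Fix an index j such that p_j ∉ l_i for every i ≠ j, let F be a finite family of lines in ℝ², and let ε > 0. Then there exists a line L* through p_j, distinct from L, and points p*_i for 1 ≤ i ≤ q with p*_j = p_j, such that: (a) for each i ≠ j, the lines L* and l_i meet in exactly the point p*_i; (b) for each i, the distance from p*_i to p_i is less than ε; (c) the order along the line is preserved, i.e., for all indices a, b, c, the point p_b lies strictly between p_a and p_c on L if and only if p*_b lies strictly between p*_a and p*_c on L*; and (d) for each i ≠ j, the point p*_i does not lie on any line M ∈ F with M ≠ l_i. -/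
/-!
Write `L = p j + ℝ v`, `p i = p j + t i • v`, and complete `v` to a basis `(v, u)`. Each `l i`
has a direction `α i • v + β i • u` with `β i ≠ 0`, because `l i ≠ L`. The line through `p j`
with direction `v + θ • u` meets `l i` at the point of coordinate `t i β i / (β i - θ α i)`,
which tends to `t i` as `θ → 0`. So for all small `θ ≠ 0` the new points are `ε`-close to the old
ones and in the same order. Since that intersection point moves injectively with `θ` along `l i`,
it lies on a line `M ≠ l i` for at most one `θ`, so these finitely many values can be avoided.
-/

open Filter Topology

section LinearAlgebra

variable {K V : Type*} [Field K] [AddCommGroup V] [Module K V]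

lemma exists_linearIndependent_pair_of_finrank_eq_two [FiniteDimensional K V]
    (hV : Module.finrank K V = 2) {v : V} (hv : v ≠ 0) :
    ∃ u : V, LinearIndependent K ![v, u] ∧ ∀ x : V, ∃ a b : K, a • v + b • u = x := by
  obtain ⟨u, hu⟩ : ∃ u : V, u ∉ K ∙ v := by
    by_contra! h
    have := finrank_span_singleton (K := K) hv
    rw [Submodule.eq_top_iff'.mpr h, finrank_top, hV] at this
    norm_num at this
  have hvu : LinearIndependent K ![v, u] :=
    (LinearIndependent.pair_iff' hv).mpr fun a h => hu (h ▸ Submodule.smul_mem _ a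
      (Submodule.mem_span_singleton_self v))
  refine ⟨u, hvu, fun x => ?_⟩
  have hx : x ∈ Submodule.span K (Set.range ![v, u]) := by
    rw [hvu.span_eq_top_of_card_eq_finrank' (by simp [hV])]
    exact Submodule.mem_top
  rw [Matrix.range_cons, Matrix.range_cons, Matrix.range_empty, Set.union_empty,
    Set.singleton_union] at hx
  exact Submodule.mem_span_pair.mp hx

end LinearAlgebra

section Betweenness

lemma Filter.eventually_lt_iff_lt {α β ι : Type*} [Finite ι] [LinearOrder β] [TopologicalSpace β]
    [OrderClosedTopology β] {l : Filter α} {f : ι → α → β} {t : ι → β}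
    (ht : Function.Injective t) (hf : ∀ i, Tendsto (f i) l (𝓝 (t i))) :
    ∀ᶠ x in l, ∀ a b, t a < t b ↔ f a x < f b x := by
  have hlt : ∀ᶠ x in l, ∀ a b, t a < t b → f a x < f b x := by
    simp only [eventually_all]
    exact fun a b hab => (hf a).eventually_lt (hf b) hab
  filter_upwards [hlt] with x hx a b
  refine ⟨hx a b, fun h => ?_⟩
  rcases lt_trichotomy (t a) (t b) with hab | hab | hab
  · exact hab
  · exact absurd (ht hab ▸ h) (lt_irrefl _)
  · exact absurd h (hx b a hab).not_gt

lemma sbtw_real_iff {a b c : ℝ} : Sbtw ℝ a b c ↔ a < b ∧ b < c ∨ c < b ∧ b < a := by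
  rw [Sbtw, Wbtw, affineSegment_eq_segment, segment_eq_uIcc, Set.mem_uIcc]
  constructor
  · rintro ⟨⟨hab, hbc⟩ | ⟨hcb, hba⟩, hne, hne'⟩
    · exact .inl ⟨hab.lt_of_ne' hne, hbc.lt_of_ne hne'⟩
    · exact .inr ⟨hcb.lt_of_ne' hne', hba.lt_of_ne hne⟩
  · rintro (⟨hab, hbc⟩ | ⟨hcb, hba⟩)
    · exact ⟨.inl ⟨hab.le, hbc.le⟩, hab.ne', hbc.ne⟩
    · exact ⟨.inr ⟨hcb.le, hba.le⟩, hba.ne, hcb.ne'⟩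

variable {V : Type*} [AddCommGroup V] [Module ℝ V]

lemma sbtw_smul_add_iff {x o : V} (hx : x ≠ 0) (a b c : ℝ) :
    Sbtw ℝ (a • x + o) (b • x + o) (c • x + o) ↔ Sbtw ℝ a b c := by
  have hne : o ≠ x + o := fun h => hx (by simpa using h.symm)
  have hmap : ∀ r : ℝ, AffineMap.lineMap o (x + o) r = r • x + o := fun r => by
    simp [AffineMap.lineMap_apply]
  rw [← hmap a, ← hmap b, ← hmap c, (AffineMap.lineMap_injective ℝ hne).sbtw_map_iff]

lemma sbtw_smul_add_iff_of_lt_iff_lt {ι : Type*} {s t : ι → ℝ}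
    (hst : ∀ a b, s a < s b ↔ t a < t b) {x y o o' : V} (hx : x ≠ 0) (hy : y ≠ 0) (a b c : ι) :
    Sbtw ℝ (s a • x + o) (s b • x + o) (s c • x + o) ↔
      Sbtw ℝ (t a • y + o') (t b • y + o') (t c • y + o') := by
  simp only [sbtw_smul_add_iff hx, sbtw_smul_add_iff hy, sbtw_real_iff, hst]

end Betweenness

section Rotation

variable {V : Type*} [AddCommGroup V] [Module ℝ V] {o v u : V}

lemma AffineSubspace.exists_smul_add_eq {L : AffineSubspace ℝ V} (hL : L.direction = ℝ ∙ v)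
    {x y : V} (hx : x ∈ L) (hy : y ∈ L) : ∃ t : ℝ, t • v + y = x := by
  obtain ⟨t, ht⟩ := Submodule.mem_span_singleton.mp (hL ▸ L.vsub_mem_direction hx hy)
  exact ⟨t, by rw [ht, vsub_eq_sub, sub_add_cancel]⟩

variable (o v u) in
def rotatedLine (θ : ℝ) : AffineSubspace ℝ V :=
  AffineSubspace.mk' o (ℝ ∙ (v + θ • u))

/-- The coordinate, on `rotatedLine o v u θ`, of its intersection with the line through
`t • v + o` with direction `α • v + β • u`. -/
noncomputable def rotatedCoord (t α β θ : ℝ) : ℝ :=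
  t * β / (β - θ * α)

variable (o v u) in
noncomputable def rotatedPoint (t α β θ : ℝ) : V :=
  rotatedCoord t α β θ • (v + θ • u) + o

lemma LinearIndependent.add_smul_ne_zero (hvu : LinearIndependent ℝ ![v, u]) (θ : ℝ) :
    v + θ • u ≠ 0 := fun h => by
  simpa using LinearIndependent.pair_iff.mp hvu 1 θ (by rw [one_smul]; exact h)

lemma LinearIndependent.direction_rotatedLine_ne (hvu : LinearIndependent ℝ ![v, u])
    {α β θ : ℝ} (h : β - θ * α ≠ 0) :
    (rotatedLine o v u θ).direction ≠ ℝ ∙ (α • v + β • u) := by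
  intro heq
  rw [rotatedLine, AffineSubspace.direction_mk'] at heq
  obtain ⟨c, hc⟩ := Submodule.mem_span_singleton.mp
    (heq ▸ Submodule.mem_span_singleton_self (α • v + β • u))
  obtain ⟨hα, hβ⟩ := LinearIndependent.pair_iff.mp hvu (c - α) (c * θ - β)
    (by linear_combination (norm := module) hc)
  exact h (by linear_combination hα * θ - hβ)

lemma LinearIndependent.rotatedLine_ne (hvu : LinearIndependent ℝ ![v, u]) {θ : ℝ} (hθ : θ ≠ 0)
    {L : AffineSubspace ℝ V} (hL : L.direction = ℝ ∙ v) : rotatedLine o v u θ ≠ L :=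
  fun h => hvu.direction_rotatedLine_ne (o := o) (α := 1) (β := 0) (by simpa using hθ)
    (by simp [h, hL])

lemma eventually_sub_mul_ne {α β : ℝ} (hβ : β ≠ 0) : ∀ᶠ θ in 𝓝 0, β - θ * α ≠ 0 :=
  (continuous_const.sub (continuous_id.mul continuous_const)).continuousAt.eventually_ne
    (by simpa using hβ)

lemma tendsto_rotatedCoord {t α β : ℝ} (hβ : β ≠ 0) :
    Tendsto (rotatedCoord t α β) (𝓝 0) (𝓝 t) := by
  have hc : ContinuousAt (rotatedCoord t α β) 0 := continuousAt_const.div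
    (continuous_const.sub (continuous_id.mul continuous_const)).continuousAt (by simpa using hβ)
  simpa [ContinuousAt, rotatedCoord, hβ] using hc

lemma rotatedPoint_mem_rotatedLine (t α β θ : ℝ) :
    rotatedPoint o v u t α β θ ∈ rotatedLine o v u θ := by
  rw [rotatedLine, AffineSubspace.mem_mk', rotatedPoint, vsub_eq_sub, add_sub_cancel_right]
  exact Submodule.smul_mem _ _ (Submodule.mem_span_singleton_self _)

lemma rotatedPoint_mem {l : AffineSubspace ℝ V} {t α β θ : ℝ} (hl : t • v + o ∈ l)
    (hdir : l.direction = ℝ ∙ (α • v + β • u)) (hβ : β ≠ 0) (hθ : β - θ * α ≠ 0) :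
    rotatedPoint o v u t α β θ ∈ l := by
  rw [← AffineSubspace.vsub_right_mem_direction_iff_mem hl, hdir,
    Submodule.mem_span_singleton]
  set g := rotatedCoord t α β θ
  have hg : g * (β - θ * α) = t * β := div_mul_cancel₀ _ hθ
  have hα : g * θ / β * α = g - t := by
    field_simp
    linear_combination -hg
  refine ⟨g * θ / β, ?_⟩
  rw [rotatedPoint, vsub_eq_sub, smul_add, smul_smul, smul_smul, hα, div_mul_cancel₀ _ hβ]
  module

lemma rotatedCoord_ne_zero {t α β θ : ℝ} (ht : t ≠ 0) (hβ : β ≠ 0) (hθ : β - θ * α ≠ 0) :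
    rotatedCoord t α β θ ≠ 0 :=
  div_ne_zero (mul_ne_zero ht hβ) hθ

lemma tendsto_rotatedPoint [TopologicalSpace V] [IsTopologicalAddGroup V] [ContinuousSMul ℝ V]
    {t α β : ℝ} (hβ : β ≠ 0) :
    Tendsto (rotatedPoint o v u t α β) (𝓝 0) (𝓝 (t • v + o)) := by
  have h : Tendsto (fun θ => rotatedCoord t α β θ • (v + θ • u) + o) (𝓝 0)
      (𝓝 (t • (v + (0 : ℝ) • u) + o)) := ((tendsto_rotatedCoord hβ).smul
    (tendsto_const_nhds.add (tendsto_id.smul tendsto_const_nhds))).add tendsto_const_nhds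
  rwa [zero_smul, add_zero] at h

lemma LinearIndependent.injOn_rotatedPoint (hvu : LinearIndependent ℝ ![v, u]) {t α β : ℝ}
    (ht : t ≠ 0) (hβ : β ≠ 0) : Set.InjOn (rotatedPoint o v u t α β) {θ | β - θ * α ≠ 0} := by
  intro θ₁ hθ₁ θ₂ _ heq
  set g₁ := rotatedCoord t α β θ₁
  set g₂ := rotatedCoord t α β θ₂
  obtain ⟨hg, hgθ⟩ := LinearIndependent.pair_iff.mp hvu (g₁ - g₂) (g₁ * θ₁ - g₂ * θ₂)
    (by linear_combination (norm := module) add_right_cancel heq)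
  refine mul_left_cancel₀ (rotatedCoord_ne_zero ht hβ hθ₁) ?_
  linear_combination hgθ - θ₂ * hg

end Rotation

section Lines

lemma IsLine.exists_direction_eq_span {K : AffineSubspace ℝ Plane} (hK : IsLine K) :
    ∃ w : Plane, w ≠ 0 ∧ K.direction = ℝ ∙ w := by
  have hbot : K.direction ≠ ⊥ := fun h => by
    rw [IsLine, h, finrank_bot] at hK
    exact zero_ne_one hK
  obtain ⟨w, hwK, hw⟩ := Submodule.exists_mem_ne_zero_of_ne_bot hbot
  exact ⟨w, hw, eq_span_singleton_of_mem_of_finrank_eq_one hK hwK hw⟩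

lemma IsLine.inter_subsingleton {K₁ K₂ : AffineSubspace ℝ Plane} (h₁ : IsLine K₁)
    (h₂ : IsLine K₂) (hne : K₁ ≠ K₂) : ((K₁ : Set Plane) ∩ K₂).Subsingleton := by
  intro x hx y hy
  by_contra hxy
  have hyx : y -ᵥ x ≠ 0 := vsub_ne_zero.mpr (Ne.symm hxy)
  have hdir : ∀ {K : AffineSubspace ℝ Plane}, IsLine K → x ∈ K → y ∈ K →
      K.direction = ℝ ∙ (y -ᵥ x) := fun hK hxK hyK =>
    eq_span_singleton_of_mem_of_finrank_eq_one hK (AffineSubspace.vsub_mem_direction hyK hxK) hyx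
  exact hne (AffineSubspace.ext_of_direction_eq ((hdir h₁ hx.1 hy.1).trans
    (hdir h₂ hx.2 hy.2).symm) ⟨x, hx⟩)

lemma isLine_mk'_span {w : Plane} (hw : w ≠ 0) (x : Plane) :
    IsLine (AffineSubspace.mk' x (ℝ ∙ w)) := by
  rw [IsLine, AffineSubspace.direction_mk']
  exact finrank_span_singleton hw

variable {v u : Plane}

lemma IsLine.exists_direction_eq_span_of_ne {K L : AffineSubspace ℝ Plane} (hK : IsLine K)
    (hLv : L.direction = ℝ ∙ v) (hvu : ∀ x : Plane, ∃ a b : ℝ, a • v + b • u = x)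
    {x : Plane} (hxK : x ∈ K) (hxL : x ∈ L) (hKL : K ≠ L) :
    ∃ α β : ℝ, β ≠ 0 ∧ K.direction = ℝ ∙ (α • v + β • u) := by
  obtain ⟨w, hw, hKw⟩ := hK.exists_direction_eq_span
  obtain ⟨α, β, rfl⟩ := hvu w
  refine ⟨α, β, fun hβ => hKL ?_, hKw⟩
  subst hβ
  have hα : α ≠ 0 := by rintro rfl; simp at hw
  refine AffineSubspace.ext_of_direction_eq ?_ ⟨x, hxK, hxL⟩
  rw [hKw, hLv, zero_smul, add_zero, Submodule.span_singleton_smul_eq (IsUnit.mk0 α hα)]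

lemma LinearIndependent.isLine_rotatedLine (hvu : LinearIndependent ℝ ![v, u]) (o : Plane)
    (θ : ℝ) : IsLine (rotatedLine o v u θ) :=
  isLine_mk'_span (hvu.add_smul_ne_zero θ) o

lemma LinearIndependent.rotatedLine_inter_eq (hvu : LinearIndependent ℝ ![v, u]) {o : Plane}
    {l : AffineSubspace ℝ Plane} (hl : IsLine l) {t α β θ : ℝ} (htl : t • v + o ∈ l)
    (hdir : l.direction = ℝ ∙ (α • v + β • u)) (hβ : β ≠ 0) (hθ : β - θ * α ≠ 0) :
    (rotatedLine o v u θ : Set Plane) ∩ l = {rotatedPoint o v u t α β θ} := by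
  have hmem : rotatedPoint o v u t α β θ ∈ (rotatedLine o v u θ : Set Plane) ∩ l :=
    ⟨rotatedPoint_mem_rotatedLine t α β θ, rotatedPoint_mem htl hdir hβ hθ⟩
  have hne : rotatedLine o v u θ ≠ l := fun h => hvu.direction_rotatedLine_ne hθ (h ▸ hdir)
  exact ((hvu.isLine_rotatedLine o θ).inter_subsingleton hl hne).eq_singleton_of_mem hmem

lemma LinearIndependent.eventually_rotatedPoint_notMem (hvu : LinearIndependent ℝ ![v, u])
    {o : Plane} {l M : AffineSubspace ℝ Plane} (hl : IsLine l) (hM : IsLine M) (hMl : M ≠ l)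
    {t α β : ℝ} (ht : t ≠ 0) (htl : t • v + o ∈ l) (hdir : l.direction = ℝ ∙ (α • v + β • u))
    (hβ : β ≠ 0) : ∀ᶠ θ in 𝓝[≠] (0 : ℝ), rotatedPoint o v u t α β θ ∉ M := by
  set S := {θ | β - θ * α ≠ 0 ∧ rotatedPoint o v u t α β θ ∈ M}
  have hS : S.Subsingleton := fun θ₁ h₁ θ₂ h₂ => hvu.injOn_rotatedPoint ht hβ h₁.1 h₂.1 <|
    (hM.inter_subsingleton hl hMl) ⟨h₁.2, rotatedPoint_mem htl hdir hβ h₁.1⟩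
      ⟨h₂.2, rotatedPoint_mem htl hdir hβ h₂.1⟩
  filter_upwards [hS.finite.eventually_cofinite_notMem.filter_mono (nhdsNE_le_cofinite 0),
    nhdsWithin_le_nhds (eventually_sub_mul_ne hβ)] with θ hθS hθ hθM
  exact hθS ⟨hθ, hθM⟩

end Lines

theorem rotate_line_about_pivot_general
    (L : AffineSubspace ℝ Plane) (hL : IsLine L)
    (q : ℕ) (p : Fin q → Plane)
    (hp_inj : Function.Injective p)
    (hpL : ∀ i, p i ∈ L)
    (l : Fin q → AffineSubspace ℝ Plane)
    (hl_line : ∀ i, IsLine (l i))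
    (hpl : ∀ i, p i ∈ l i)
    (hlL : ∀ i, l i ≠ L)
    (j : Fin q)
    (F : Set (AffineSubspace ℝ Plane)) (hF : F.Finite) (hFline : ∀ M ∈ F, IsLine M)
    (ε : ℝ) (hε : 0 < ε) :
    ∃ (L' : AffineSubspace ℝ Plane) (p' : Fin q → Plane),
      IsLine L' ∧ L' ≠ L ∧ p j ∈ L' ∧ p' j = p j ∧
      (∀ i, p' i ∈ L') ∧
      (∀ i, i ≠ j → (L' : Set Plane) ∩ (l i : Set Plane) = {p' i}) ∧
      (∀ i, dist (p' i) (p i) < ε) ∧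
      (∀ i₁ i₂ i₃ : Fin q,
        Sbtw ℝ (p i₁) (p i₂) (p i₃) ↔ Sbtw ℝ (p' i₁) (p' i₂) (p' i₃)) ∧
      (∀ i, i ≠ j → ∀ M ∈ F, M ≠ l i → p' i ∉ M) := by
  obtain ⟨v, hv, hLv⟩ := hL.exists_direction_eq_span
  obtain ⟨u, hvu, hspan⟩ :=
    exists_linearIndependent_pair_of_finrank_eq_two finrank_euclideanSpace_fin hv
  choose t ht using fun i => AffineSubspace.exists_smul_add_eq hLv (hpL i) (hpL j)
  have ht_inj : Function.Injective t := fun a b h => hp_inj (by rw [← ht a, ← ht b, h])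
  have htj : t j = 0 := by simpa [hv] using ht j
  have htl : ∀ i, t i • v + p j ∈ l i := fun i => (ht i).symm ▸ hpl i
  choose α β hβ hdir using fun i =>
    (hl_line i).exists_direction_eq_span_of_ne hLv hspan (hpl i) (hpL i) (hlL i)
  let P i := rotatedPoint (p j) v u (t i) (α i) (β i)
  have hθ0 : ∀ᶠ θ in 𝓝[≠] (0 : ℝ), θ ≠ 0 := eventually_mem_nhdsWithin
  have hβθ : ∀ᶠ θ in 𝓝 (0 : ℝ), ∀ i, β i - θ * α i ≠ 0 :=
    eventually_all.2 fun i => eventually_sub_mul_ne (hβ i)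
  have hdist : ∀ᶠ θ in 𝓝 (0 : ℝ), ∀ i, dist (P i θ) (p i) < ε :=
    eventually_all.2 fun i => ht i ▸ tendsto_rotatedPoint (hβ i) (Metric.ball_mem_nhds _ hε)
  have horder : ∀ᶠ θ in 𝓝 (0 : ℝ), ∀ a b,
      t a < t b ↔ rotatedCoord (t a) (α a) (β a) θ < rotatedCoord (t b) (α b) (β b) θ :=
    eventually_lt_iff_lt ht_inj fun i => tendsto_rotatedCoord (hβ i)
  have havoid : ∀ᶠ θ in 𝓝[≠] (0 : ℝ), ∀ i, i ≠ j → ∀ M ∈ F, M ≠ l i → P i θ ∉ M :=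
    eventually_all.2 fun i => eventually_imp_distrib_left.2 fun hij =>
      hF.eventually_all.2 fun M hM => eventually_imp_distrib_left.2 fun hMl =>
        hvu.eventually_rotatedPoint_notMem (hl_line i) (hFline M hM) hMl
          (fun h => hij (ht_inj (h.trans htj.symm))) (htl i) (hdir i) (hβ i)
  obtain ⟨θ, hθ, ⟨hβθ, hdist, horder⟩, havoid⟩ :=
    (hθ0.and <| ((hβθ.and <| hdist.and horder).filter_mono nhdsWithin_le_nhds).and havoid).exists
  refine ⟨rotatedLine (p j) v u θ, fun i => P i θ, hvu.isLine_rotatedLine _ θ,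
    hvu.rotatedLine_ne (by simpa using hθ) hLv,
    AffineSubspace.self_mem_mk' _ _, by simp [P, rotatedPoint, rotatedCoord, htj],
    fun i => rotatedPoint_mem_rotatedLine _ _ _ θ,
    fun i _ => hvu.rotatedLine_inter_eq (hl_line i) (htl i) (hdir i) (hβ i) (hβθ i), hdist,
    fun a b c => ?_, havoid⟩
  rw [← ht a, ← ht b, ← ht c]
  exact sbtw_smul_add_iff_of_lt_iff_lt horder hv (hvu.add_smul_ne_zero θ) a b c

/-- Lemma 13 (move1) of the paper: a line `L` through distinct points `p 1, …, p q`,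
each `p i` lying on a line `l i ≠ L`, can be rotated about a pivot `p j` (which lies on
no `l i` for `i ≠ j`) to a new line `L'` through `p j`, relocating each `p i` to a point
`p' i` on `L'` such that: each `p' i` (for `i ≠ j`) is the unique intersection point of
`L'` and `l i`; each `p' i` is within `ε` of `p i`; strict betweenness (the order of the
points along the line) is preserved; and each `p' i` (for `i ≠ j`) avoids every line of
the prescribed finite family `F` other than `l i`. -/
theorem rotate_line_about_pivot
    (L : AffineSubspace ℝ Plane) (hL : IsLine L)
    (q : ℕ) (p : Fin q → Plane)
    (hp_inj : Function.Injective p)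
    (hpL : ∀ i, p i ∈ L)
    (l : Fin q → AffineSubspace ℝ Plane)
    (hl_line : ∀ i, IsLine (l i))
    (hpl : ∀ i, p i ∈ l i)
    (hlL : ∀ i, l i ≠ L)
    (j : Fin q) (hj : ∀ i, i ≠ j → p j ∉ l i)
    (F : Set (AffineSubspace ℝ Plane)) (hF : F.Finite) (hFline : ∀ M ∈ F, IsLine M)
    (ε : ℝ) (hε : 0 < ε) :
    ∃ (L' : AffineSubspace ℝ Plane) (p' : Fin q → Plane),
      IsLine L' ∧ L' ≠ L ∧ p j ∈ L' ∧ p' j = p j ∧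
      (∀ i, p' i ∈ L') ∧
      (∀ i, i ≠ j → (L' : Set Plane) ∩ (l i : Set Plane) = {p' i}) ∧
      (∀ i, dist (p' i) (p i) < ε) ∧
      (∀ i₁ i₂ i₃ : Fin q,
        Sbtw ℝ (p i₁) (p i₂) (p i₃) ↔ Sbtw ℝ (p' i₁) (p' i₂) (p' i₃)) ∧
      (∀ i, i ≠ j → ∀ M ∈ F, M ≠ l i → p' i ∉ M) :=
  rotate_line_about_pivot_general L hL q p hp_inj hpL l hl_line hpl hlL j F hF hFline ε hε
end
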